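/- Let (T(t)) be a C₀-semigroup on a Banach space E with generator (A,dom(A)), 0 ∈ ρ(A), and extrapolation data (E₋₁,ι,T₋₁,A₋₁), and let (𝒰(t)) be the semigroup on 𝓛(E) left implemented by (T(t)), with generator 𝒢. Suppose B ∈ 𝒮^{DS}_{t₀}(T) for some t₀ > 0, and let (S(t)) be the perturbed C₀-semigroup on E generated by (A₋₁+B)|_E (domain {x ∈ E : A₋₁(ιx)+Bx ∈ ι(E)}), which satisfies ι(S(t)x) = ι(T(t)x) + ∫₀^t T₋₁(t−r)B(S(r)x) dr. Define 𝒦 : 𝓛(E) → 𝓛(E,E₋₁) by 𝒦(C) := B∘C. Then 𝒦 ∈ 𝒮^{DS,τ_sot}_{t₀}(𝒰), and the perturbed τ_sot-bi-continuous semigroup (𝒱(t)) on 𝓛(E) generated by (𝒢₋₁+𝒦)|_{𝓛(E)} is left implemented by (S(t)): 𝒱(t)C = S(t)∘C for all t ≥ 0 and C ∈ 𝓛(E). -/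

import Mathlib

open Set Filter Topology MeasureTheory

variable {E E₁ : Type*} [NormedAddCommGroup E] [NormedSpace ℝ E]
  [NormedAddCommGroup E₁] [NormedSpace ℝ E₁]

/-- A `C₀`-semigroup on a Banach space `E`. -/
structure IsC0Semigroup (T : ℝ → E →L[ℝ] E) : Prop where
  map_zero : T 0 = 1
  map_add : ∀ s t : ℝ, 0 ≤ s → 0 ≤ t → T (s + t) = (T s).comp (T t)
  strongCont : ∀ x : E, ContinuousOn (fun t => T t x) (Ici (0:ℝ))

/-- The generator relation of a `C₀`-semigroup: `y = Ax`. -/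
def C0GenRel (T : ℝ → E →L[ℝ] E) (x y : E) : Prop :=
  Tendsto (fun t : ℝ => t⁻¹ • (T t x - x)) (nhdsWithin 0 (Ioi 0)) (nhds y)

/-- Extrapolation data `(E₋₁, ι, T₋₁, A₋₁)` for a `C₀`-semigroup `T` with `0 ∈ ρ(A)`:
`ι : E → E₋₁` is a continuous dense injection, `T₋₁` a `C₀`-semigroup on `E₋₁` extending `T`
via `ι`, whose generator `A₋₁` has domain `ι(E)`, extends `A`, and `Am = A₋₁ ∘ ι : E → E₋₁`
is an isomorphism. -/
structure ExtrapolationData (T : ℝ → E →L[ℝ] E) (T₁ : ℝ → E₁ →L[ℝ] E₁)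
    (ι : E →L[ℝ] E₁) (Am : E ≃L[ℝ] E₁) : Prop where
  c0T : IsC0Semigroup T
  c0T₁ : IsC0Semigroup T₁
  inj : Function.Injective ι
  dense : DenseRange ι
  intertwine : ∀ t : ℝ, 0 ≤ t → ∀ x : E, T₁ t (ι x) = ι (T t x)
  gen₁ : ∀ x : E, C0GenRel T₁ (ι x) (Am x)
  gen₁_dom : ∀ z y : E₁, C0GenRel T₁ z y → z ∈ Set.range ι
  gen_extends : ∀ x y : E, C0GenRel T x y → (Am x : E₁) = ι y
  zero_res : ∃ R : E →L[ℝ] E, (∀ y : E, C0GenRel T (R y) y) ∧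
    ∀ x y : E, C0GenRel T x y → x = R y

/-- The Desch–Schappacher admissibility class `𝒮^{DS}_{t₀}(T)` for a `C₀`-semigroup:
for every strongly continuous `𝓛(E)`-valued `F` the Volterra integrals take values in `ι(E)`,
give a strongly continuous `𝓛(E)`-valued function `V_B F`, and `‖V_B‖ ≤ q < 1`. -/
def MemSDS (T₁ : ℝ → E₁ →L[ℝ] E₁) (ι : E →L[ℝ] E₁) (B : E →L[ℝ] E₁) (t₀ : ℝ) : Prop :=
  ∃ q : ℝ, 0 ≤ q ∧ q < 1 ∧
    ∀ F : ℝ → E →L[ℝ] E, (∀ x : E, ContinuousOn (fun r => F r x) (Icc (0:ℝ) t₀)) →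
      ∃ G : ℝ → E →L[ℝ] E,
        (∀ t ∈ Icc (0:ℝ) t₀, ∀ x : E,
          ι (G t x) = ∫ r in (0:ℝ)..t, T₁ (t - r) (B (F r x))) ∧
        (∀ x : E, ContinuousOn (fun t => G t x) (Icc (0:ℝ) t₀)) ∧
        ∀ c : ℝ, (∀ s ∈ Icc (0:ℝ) t₀, ‖F s‖ ≤ c) → ∀ t ∈ Icc (0:ℝ) t₀, ‖G t‖ ≤ q * c

/-- The semigroup on `𝓛(E)` left implemented by `T`: `𝒰(t)C := T(t) ∘ C`. -/
noncomputable def implemented (T : ℝ → E →L[ℝ] E) (t : ℝ) :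
    (E →L[ℝ] E) →L[ℝ] (E →L[ℝ] E) :=
  ContinuousLinearMap.compL ℝ E E E (T t)

/-- The extrapolated implemented semigroup on `𝓛(E,E₋₁)`: `𝒰₋₁(t)S := T₋₁(t) ∘ S`. -/
noncomputable def implementedExt (T₁ : ℝ → E₁ →L[ℝ] E₁) (t : ℝ) :
    (E →L[ℝ] E₁) →L[ℝ] (E →L[ℝ] E₁) :=
  ContinuousLinearMap.compL ℝ E E₁ E₁ (T₁ t)

/-- Membership in the space `𝔛_{t₀}` of strongly `τ_sot`-continuous, norm-bounded,
bi-equicontinuous functions `F : [0,t₀] → 𝓛(𝓛(E))`. -/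
def MemXsot (t₀ : ℝ) (F : ℝ → (E →L[ℝ] E) →L[ℝ] (E →L[ℝ] E)) : Prop :=
  (∀ (C : E →L[ℝ] E) (x : E), ContinuousOn (fun t => (F t C) x) (Icc (0:ℝ) t₀)) ∧
  (∃ M : ℝ, ∀ t ∈ Icc (0:ℝ) t₀, ‖F t‖ ≤ M) ∧
  ∀ u : ℕ → E →L[ℝ] E, (∃ c : ℝ, ∀ n, ‖u n‖ ≤ c) →
    (∀ x : E, Tendsto (fun n => u n x) atTop (nhds (0:E))) →
    ∀ x : E, ∀ ε > (0:ℝ), ∃ N : ℕ, ∀ n ≥ N, ∀ t ∈ Icc (0:ℝ) t₀, ‖(F t (u n)) x‖ < ε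

/-- The Desch–Schappacher admissibility class `𝒮^{DS,τ_sot}_{t₀}(𝒰)` for the implemented
semigroup: `𝒦 : 𝓛(E) → 𝓛(E,E₋₁)` is `τ_sot`-to-`τ_sot` continuous, and the Volterra operator
`(V_𝒦 F)(t)C = ∫₀ᵗ 𝒰₋₁(t-r) 𝒦(F(r)C) dr` takes values in `𝓛(E)`, maps `𝔛_{t₀}` into itself
and has `‖V_𝒦‖ ≤ q < 1`. -/
def MemSDSsot (T₁ : ℝ → E₁ →L[ℝ] E₁) (ι : E →L[ℝ] E₁)
    (K : (E →L[ℝ] E) →L[ℝ] (E →L[ℝ] E₁)) (t₀ : ℝ) : Prop :=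
  (∀ x : E, ∃ (v : Finset E) (c : ℝ), 0 ≤ c ∧
      ∀ S : E →L[ℝ] E, ‖(K S) x‖ ≤ c * ∑ y ∈ v, ‖S y‖) ∧
  ∃ q : ℝ, 0 ≤ q ∧ q < 1 ∧
    ∀ F : ℝ → (E →L[ℝ] E) →L[ℝ] (E →L[ℝ] E), MemXsot t₀ F →
      ∃ G : ℝ → (E →L[ℝ] E) →L[ℝ] (E →L[ℝ] E), MemXsot t₀ G ∧
        (∀ t ∈ Icc (0:ℝ) t₀, ∀ (C : E →L[ℝ] E) (x : E),
          ι ((G t C) x) = ∫ r in (0:ℝ)..t, T₁ (t - r) ((K (F r C)) x)) ∧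
        ∀ c : ℝ, (∀ s ∈ Icc (0:ℝ) t₀, ‖F s‖ ≤ c) → ∀ t ∈ Icc (0:ℝ) t₀, ‖G t‖ ≤ q * c

/-- A `τ_sot`-bi-continuous semigroup on `𝓛(E)`. -/
structure IsBiContSotSemigroup (U : ℝ → (E →L[ℝ] E) →L[ℝ] (E →L[ℝ] E)) : Prop where
  map_zero : U 0 = 1
  map_add : ∀ s t : ℝ, 0 ≤ s → 0 ≤ t → U (s + t) = (U s).comp (U t)
  strongCont : ∀ (C : E →L[ℝ] E) (x : E), ContinuousOn (fun t => (U t C) x) (Ici (0:ℝ))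
  expBound : ∃ M : ℝ, 1 ≤ M ∧ ∃ ω : ℝ, ∀ t : ℝ, 0 ≤ t → ‖U t‖ ≤ M * Real.exp (ω * t)
  biequi : ∀ t₀ : ℝ, 0 < t₀ → ∀ u : ℕ → E →L[ℝ] E, (∃ c : ℝ, ∀ n, ‖u n‖ ≤ c) →
    (∀ x : E, Tendsto (fun n => u n x) atTop (nhds (0:E))) →
    ∀ x : E, ∀ ε > (0:ℝ), ∃ N : ℕ, ∀ n ≥ N, ∀ t ∈ Icc (0:ℝ) t₀, ‖(U t (u n)) x‖ < ε

/-- The generator relation of a `τ_sot`-bi-continuous semigroup on `𝓛(E)`. -/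
def SotGenRel (U : ℝ → (E →L[ℝ] E) →L[ℝ] (E →L[ℝ] E)) (C Y : E →L[ℝ] E) : Prop :=
  (∀ x : E, Tendsto (fun t : ℝ => t⁻¹ • ((U t C) x - C x))
      (nhdsWithin 0 (Ioi 0)) (nhds (Y x))) ∧
    ∃ M : ℝ, ∀ t ∈ Ioc (0:ℝ) 1, ‖U t C - C‖ ≤ M * t

/-- `V` is a `τ_sot`-bi-continuous semigroup on `𝓛(E)` generated by `(𝒢₋₁ + 𝒦)|_{𝓛(E)}`,
where `𝒢₋₁ C = A₋₁ ∘ ι ∘ C` and the domain is `{C : 𝒢₋₁C + 𝒦C ∈ 𝓛(E)}`. -/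
def GeneratedByPerturbedImpl (V : ℝ → (E →L[ℝ] E) →L[ℝ] (E →L[ℝ] E))
    (ι : E →L[ℝ] E₁) (Am : E ≃L[ℝ] E₁)
    (K : (E →L[ℝ] E) →L[ℝ] (E →L[ℝ] E₁)) : Prop :=
  IsBiContSotSemigroup V ∧ ∀ C Y : E →L[ℝ] E,
    SotGenRel V C Y ↔ ι.comp Y = ((Am : E →L[ℝ] E₁)).comp C + K C

/-!
The first claim is pointwise in `C`: `(V_𝒦 F)(t) C` is the solution `V_B (F(·) C)` provided by
`B ∈ 𝒮^{DS}_{t₀}(T)`, and it is linear in `C` because `ι` is injective, so that solutions are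
unique. Composing `F` with a rank-one projection `P` fixing `x` shows that `‖(V_B F)(t) x‖` is
controlled by `sup_s ‖F(s) x‖` alone; this turns the bi-equicontinuity of `F` into that of
`V_𝒦 F`. For the second claim, `C ↦ S(t) ∘ C` is bi-continuous because `S` is bounded on compact
time intervals, and its generator is computed pointwise from that of `S`, the required Lipschitz
bound `‖S(t) C - C‖ = O(t)` coming from the mean value inequality.
-/

section C0Semigroup

variable {X : Type*} [NormedAddCommGroup X] [NormedSpace ℝ X] {U : ℝ → X →L[ℝ] X}

theorem IsC0Semigroup.exists_norm_le_of_mem_Icc [CompleteSpace X] (hU : IsC0Semigroup U)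
    (a : ℝ) : ∃ M : ℝ, 1 ≤ M ∧ ∀ t ∈ Icc (0:ℝ) a, ‖U t‖ ≤ M := by
  have hpt : ∀ x : X, ∃ C : ℝ, ∀ i : Icc (0:ℝ) a, ‖U i x‖ ≤ C := fun x => by
    obtain ⟨C, hC⟩ := isCompact_Icc.exists_bound_of_continuousOn
      ((hU.strongCont x).mono fun _ hs => hs.1)
    exact ⟨C, fun i => hC i i.2⟩
  obtain ⟨M, hM⟩ := banach_steinhaus hpt
  exact ⟨max M 1, le_max_right _ _, fun t ht => (hM ⟨t, ht⟩).trans (le_max_left _ _)⟩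

theorem IsC0Semigroup.exists_norm_le_exp [CompleteSpace X] (hU : IsC0Semigroup U) :
    ∃ M : ℝ, 1 ≤ M ∧ ∃ ω : ℝ, ∀ t : ℝ, 0 ≤ t → ‖U t‖ ≤ M * Real.exp (ω * t) := by
  obtain ⟨M, hM1, hM⟩ := hU.exists_norm_le_of_mem_Icc 1
  have hM0 : 0 ≤ M := zero_le_one.trans hM1
  have hpow : ∀ n : ℕ, ∀ t ∈ Icc (0:ℝ) (n + 1), ‖U t‖ ≤ M ^ (n + 1) := by
    intro n
    induction n with
    | zero => simpa using hM
    | succ n ih =>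
      intro t ht
      rcases le_or_gt t (n + 1) with hle | hlt
      · exact (ih t ⟨ht.1, hle⟩).trans (pow_le_pow_right₀ hM1 (Nat.le_succ _))
      have hsplit : U t = (U 1).comp (U (t - 1)) := by
        rw [← hU.map_add 1 (t - 1) zero_le_one (by linarith [n.cast_nonneg (α := ℝ)]),
          add_sub_cancel]
      calc ‖U t‖ ≤ ‖U 1‖ * ‖U (t - 1)‖ := hsplit ▸ (U 1).opNorm_comp_le _
        _ ≤ M * M ^ (n + 1) := by
          gcongr
          · exact hM 1 ⟨zero_le_one, le_rfl⟩
          · push_cast at ht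
            exact ih (t - 1) ⟨by linarith [n.cast_nonneg (α := ℝ)], by linarith [ht.2]⟩
        _ = M ^ (n + 1 + 1) := by ring
  refine ⟨M, hM1, Real.log M, fun t ht => ?_⟩
  calc ‖U t‖ ≤ M ^ (⌊t⌋₊ + 1) := hpow _ t ⟨ht, (Nat.lt_floor_add_one t).le⟩
    _ = M * Real.exp (⌊t⌋₊ * Real.log M) := by
      rw [Real.exp_nat_mul, Real.exp_log (by linarith)]; ring
    _ ≤ M * Real.exp (Real.log M * t) := by
      rw [mul_comm (Real.log M)]
      gcongr
      · exact Real.log_nonneg hM1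
      · exact Nat.floor_le ht

theorem IsC0Semigroup.hasDerivWithinAt_of_c0GenRel (hU : IsC0Semigroup U) {z y : X}
    (hz : C0GenRel U z y) {t : ℝ} (ht : 0 ≤ t) :
    HasDerivWithinAt (fun s => U s z) (U t y) (Ici t) t := by
  rw [hasDerivWithinAt_iff_tendsto_slope, Ici_sdiff_left]
  have hshift : Tendsto (fun u : ℝ => u - t) (𝓝[>] t) (𝓝[>] 0) := by
    have hmaps : MapsTo (fun u : ℝ => u - t) (Ioi t) (Ioi 0) := fun _ hu =>
      sub_pos.2 (mem_Ioi.1 hu)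
    simpa using ((continuous_sub_right t).continuousWithinAt (x := t)).tendsto_nhdsWithin hmaps
  refine (((U t).continuous.tendsto y).comp (hz.comp hshift)).congr' ?_
  filter_upwards [self_mem_nhdsWithin] with u hu
  have hsplit : U u z = U t (U (u - t) z) := by
    rw [← ContinuousLinearMap.comp_apply, ← hU.map_add t (u - t) ht (sub_pos.2 hu).le,
      add_sub_cancel]
  simp [slope_def_module, hsplit]

theorem IsC0Semigroup.norm_apply_sub_le_of_c0GenRel (hU : IsC0Semigroup U) {z y : X}
    (hz : C0GenRel U z y) {a M : ℝ} (hM : ∀ s ∈ Icc (0:ℝ) a, ‖U s‖ ≤ M) {t : ℝ}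
    (ht : t ∈ Icc (0:ℝ) a) : ‖U t z - z‖ ≤ M * ‖y‖ * t := by
  have h := norm_image_sub_le_of_norm_deriv_right_le_segment
    ((hU.strongCont z).mono Icc_subset_Ici_self)
    (fun s hs => hU.hasDerivWithinAt_of_c0GenRel hz hs.1)
    (fun s hs => (U s).le_of_opNorm_le (hM s (Ico_subset_Icc_self hs)) y) t ht
  simpa [hU.map_zero] using h

theorem IsC0Semigroup.continuousOn_conv [CompleteSpace X] (hU : IsC0Semigroup U) {a : ℝ}
    {f : ℝ → X} (hf : ContinuousOn f (Icc 0 a)) :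
    ContinuousOn (fun r => U (a - r) (f r)) (Icc 0 a) := by
  obtain ⟨M, -, hM⟩ := hU.exists_norm_le_of_mem_Icc a
  have hmaps : MapsTo (fun r => a - r) (Icc 0 a) (Icc 0 a) := fun r hr =>
    ⟨by linarith [hr.2], by linarith [hr.1]⟩
  intro r₀ hr₀
  have hfixed : ContinuousWithinAt (fun r => U (a - r) (f r₀)) (Icc 0 a) r₀ :=
    ((hU.strongCont (f r₀)).comp (continuous_const.sub continuous_id).continuousOn
      fun _ hr => (hmaps hr).1) r₀ hr₀
  have hsmall : Tendsto (fun r => U (a - r) (f r - f r₀)) (𝓝[Icc 0 a] r₀) (𝓝 0) := by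
    have hf₀ : Tendsto (fun r => M * ‖f r - f r₀‖) (𝓝[Icc 0 a] r₀) (𝓝 0) := by
      simpa using ((hf r₀ hr₀).sub_const (f r₀)).norm.const_mul M
    refine squeeze_zero_norm' ?_ hf₀
    filter_upwards [self_mem_nhdsWithin] with r hr
    exact (U (a - r)).le_of_opNorm_le (hM _ (hmaps hr)) _
  simpa [ContinuousWithinAt] using hsmall.add hfixed

end C0Semigroup

theorem exists_apply_self_norm_comp_le {Y : Type*} [NormedAddCommGroup Y] [NormedSpace ℝ Y]
    (x : E) : ∃ P : E →L[ℝ] E, P x = x ∧ ∀ A : E →L[ℝ] Y, ‖A.comp P‖ ≤ ‖x‖⁻¹ * ‖A x‖ := by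
  rcases eq_or_ne x 0 with rfl | hx
  · exact ⟨0, rfl, fun A => by simp⟩
  obtain ⟨f, hf, hfx⟩ := exists_dual_vector ℝ x (norm_ne_zero_iff.2 hx)
  refine ⟨f.smulRight (‖x‖⁻¹ • x), ?_, fun A =>
    (A.comp _).opNorm_le_bound (by positivity) fun y => ?_⟩
  · simp [hfx, smul_smul, hx]
  · calc ‖A (f.smulRight (‖x‖⁻¹ • x) y)‖ = ‖f y‖ * (‖x‖⁻¹ * ‖A x‖) := by simp [norm_smul]
      _ ≤ ‖y‖ * (‖x‖⁻¹ * ‖A x‖) := by gcongr; simpa [hf] using f.le_opNorm y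
      _ = ‖x‖⁻¹ * ‖A x‖ * ‖y‖ := by ring

theorem norm_le_of_forall_norm_apply_le {V W W' : Type*} [NormedAddCommGroup V]
    [NormedSpace ℝ V] [NormedAddCommGroup W] [NormedSpace ℝ W] [NormedAddCommGroup W']
    [NormedSpace ℝ W'] {F : ℝ → V →L[ℝ] W} {G : ℝ → V →L[ℝ] W'} {t₀ q c t : ℝ} (hq : 0 ≤ q)
    (hG : ∀ x c, (∀ s ∈ Icc (0:ℝ) t₀, ‖F s x‖ ≤ c) → ∀ t ∈ Icc (0:ℝ) t₀, ‖G t x‖ ≤ q * c)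
    (hc : ∀ s ∈ Icc (0:ℝ) t₀, ‖F s‖ ≤ c) (ht : t ∈ Icc 0 t₀) : ‖G t‖ ≤ q * c := by
  have hc0 : 0 ≤ c := (norm_nonneg _).trans (hc 0 ⟨le_rfl, ht.1.trans ht.2⟩)
  refine (G t).opNorm_le_bound (mul_nonneg hq hc0) fun x => ?_
  rw [mul_assoc]
  exact hG x _ (fun s hs => (F s).le_of_opNorm_le (hc s hs) x) t ht

section Volterra

variable {T₁ : ℝ → E₁ →L[ℝ] E₁} {ι : E →L[ℝ] E₁} {B : E →L[ℝ] E₁} {t₀ : ℝ}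

variable (T₁ ι B t₀) in
def IsVolterraSolution (F G : ℝ → E →L[ℝ] E) : Prop :=
  ∀ t ∈ Icc (0:ℝ) t₀, ∀ x : E, ι (G t x) = ∫ r in (0:ℝ)..t, T₁ (t - r) (B (F r x))

theorem IsVolterraSolution.apply_eq (hι : Function.Injective ι) {F F' G G' : ℝ → E →L[ℝ] E}
    (hG : IsVolterraSolution T₁ ι B t₀ F G) (hG' : IsVolterraSolution T₁ ι B t₀ F' G')
    {t : ℝ} (ht : t ∈ Icc 0 t₀) {x : E} (hFx : ∀ r, F r x = F' r x) : G t x = G' t x :=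
  hι <| by simp only [hG t ht, hG' t ht, hFx]

theorem IsVolterraSolution.add [CompleteSpace E₁] (hT₁ : IsC0Semigroup T₁)
    {F F' G G' : ℝ → E →L[ℝ] E} (hF : ∀ x, ContinuousOn (fun r => F r x) (Icc 0 t₀))
    (hF' : ∀ x, ContinuousOn (fun r => F' r x) (Icc 0 t₀))
    (hG : IsVolterraSolution T₁ ι B t₀ F G) (hG' : IsVolterraSolution T₁ ι B t₀ F' G') :
    IsVolterraSolution T₁ ι B t₀ (F + F') (G + G') := by
  intro t ht x
  have hint : ∀ H : ℝ → E →L[ℝ] E, (∀ x, ContinuousOn (fun r => H r x) (Icc 0 t₀)) →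
      IntervalIntegrable (fun r => T₁ (t - r) (B (H r x))) volume 0 t := fun H hH =>
    (hT₁.continuousOn_conv (B.continuous.comp_continuousOn
      ((hH x).mono (Icc_subset_Icc_right ht.2)))).intervalIntegrable_of_Icc ht.1
  simp only [Pi.add_apply, add_apply, map_add, hG t ht, hG' t ht]
  exact (intervalIntegral.integral_add (hint F hF) (hint F' hF')).symm

theorem IsVolterraSolution.smul {F G : ℝ → E →L[ℝ] E} (hG : IsVolterraSolution T₁ ι B t₀ F G)
    (a : ℝ) : IsVolterraSolution T₁ ι B t₀ (a • F) (a • G) := by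
  intro t ht x
  simp only [Pi.smul_apply, smul_apply, map_smul, hG t ht, intervalIntegral.integral_smul]

theorem MemSDS.exists_pointwise_bound (hB : MemSDS T₁ ι B t₀) (hι : Function.Injective ι) :
    ∃ q : ℝ, 0 ≤ q ∧ q < 1 ∧ ∀ F : ℝ → E →L[ℝ] E,
      (∀ x, ContinuousOn (fun r => F r x) (Icc 0 t₀)) → ∃ G : ℝ → E →L[ℝ] E,
        IsVolterraSolution T₁ ι B t₀ F G ∧ (∀ x, ContinuousOn (fun t => G t x) (Icc 0 t₀)) ∧
        ∀ x c, (∀ s ∈ Icc (0:ℝ) t₀, ‖F s x‖ ≤ c) → ∀ t ∈ Icc (0:ℝ) t₀, ‖G t x‖ ≤ q * c := by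
  obtain ⟨q, hq0, hq1, hB⟩ := hB
  refine ⟨q, hq0, hq1, fun F hF => ?_⟩
  obtain ⟨G, hG, hGcont, -⟩ := hB F hF
  refine ⟨G, hG, hGcont, fun x c hc t ht => ?_⟩
  obtain ⟨P, hPx, hP⟩ := exists_apply_self_norm_comp_le (Y := E) x
  obtain ⟨G', hG', -, hG'bd⟩ := hB (fun r => (F r).comp P) fun y => hF (P y)
  have hc0 : 0 ≤ c := (norm_nonneg _).trans (hc 0 ⟨le_rfl, ht.1.trans ht.2⟩)
  have hG't : ‖G' t‖ ≤ q * (‖x‖⁻¹ * c) :=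
    hG'bd _ (fun s hs => (hP (F s)).trans (by gcongr; exact hc s hs)) t ht
  have hG'x : G t x = G' t x := IsVolterraSolution.apply_eq hι hG hG' ht fun r => by simp [hPx]
  calc ‖G t x‖ = ‖G' t x‖ := by rw [hG'x]
    _ ≤ q * (‖x‖⁻¹ * c) * ‖x‖ := (G' t).le_of_opNorm_le hG't x
    _ = q * c * (‖x‖⁻¹ * ‖x‖) := by ring
    _ ≤ q * c := mul_le_of_le_one_right (by positivity) inv_mul_le_one

theorem IsVolterraSolution.exists_clm_eq [CompleteSpace E₁] (hι : Function.Injective ι)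
    (hT₁ : IsC0Semigroup T₁) {F : ℝ → (E →L[ℝ] E) →L[ℝ] (E →L[ℝ] E)}
    (hF : ∀ C x, ContinuousOn (fun r => F r C x) (Icc 0 t₀)) {G : (E →L[ℝ] E) → ℝ → E →L[ℝ] E}
    (hG : ∀ C, IsVolterraSolution T₁ ι B t₀ (fun r => F r C) (G C)) {t : ℝ}
    (ht : t ∈ Icc 0 t₀) {K : ℝ} (hK : ∀ C, ‖G C t‖ ≤ K * ‖C‖) :
    ∃ L : (E →L[ℝ] E) →L[ℝ] (E →L[ℝ] E), ∀ C, L C = G C t := by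
  refine ⟨LinearMap.mkContinuous
    { toFun := fun C => G C t
      map_add' := fun C C' => ?_
      map_smul' := fun a C => ?_ } K hK, fun _ => rfl⟩
  · ext x
    exact (hG (C + C')).apply_eq hι ((hG C).add hT₁ (hF C) (hF C') (hG C')) ht fun r => by simp
  · ext x
    exact (hG (a • C)).apply_eq hι ((hG C).smul a) ht fun r => by simp

theorem MemSDS.memSDSsot_compL [CompleteSpace E₁] (hB : MemSDS T₁ ι B t₀)
    (hι : Function.Injective ι) (hT₁ : IsC0Semigroup T₁) :
    MemSDSsot T₁ ι (ContinuousLinearMap.compL ℝ E E E₁ B) t₀ := by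
  obtain ⟨q, hq0, hq1, hB⟩ := hB.exists_pointwise_bound hι
  refine ⟨fun x => ⟨{x}, ‖B‖, norm_nonneg _, fun C => by simpa using B.le_opNorm (C x)⟩,
    q, hq0, hq1, fun F ⟨hFcont, ⟨M, hM⟩, hFequi⟩ => ?_⟩
  choose Gc hsol hcont hbd using fun C => hB (fun r => F r C) (hFcont C)
  have hnorm : ∀ C c, (∀ s ∈ Icc (0:ℝ) t₀, ‖F s C‖ ≤ c) → ∀ t ∈ Icc (0:ℝ) t₀,
      ‖Gc C t‖ ≤ q * c := fun C _ hc _ ht => norm_le_of_forall_norm_apply_le hq0 (hbd C) hc ht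
  choose! G hG using fun t (ht : t ∈ Icc (0:ℝ) t₀) =>
    IsVolterraSolution.exists_clm_eq hι hT₁ hFcont hsol ht fun C => by
      rw [mul_assoc]
      exact hnorm C _ (fun s hs => (F s).le_of_opNorm_le (hM s hs) C) t ht
  have hnormG : ∀ c, (∀ s ∈ Icc (0:ℝ) t₀, ‖F s‖ ≤ c) → ∀ t ∈ Icc (0:ℝ) t₀, ‖G t‖ ≤ q * c :=
    fun _ hc _ ht => norm_le_of_forall_norm_apply_le hq0
      (fun C c hC t ht => hG t ht C ▸ hnorm C c hC t ht) hc ht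
  refine ⟨G, ⟨fun C x => (hcont C x).congr fun t ht => by rw [hG t ht],
    ⟨q * M, hnormG M hM⟩, fun u hu hu0 x ε hε => ?_⟩, fun t ht C x => ?_, hnormG⟩
  · obtain ⟨N, hN⟩ := hFequi u hu hu0 x (ε / 2) (half_pos hε)
    refine ⟨N, fun n hn t ht => ?_⟩
    calc ‖G t (u n) x‖ ≤ q * (ε / 2) :=
          hG t ht (u n) ▸ hbd (u n) x _ (fun s hs => (hN n hn s hs).le) t ht
      _ < ε := by nlinarith
  · simpa [hG t ht] using hsol C t ht x

end Volterra

section Implemented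

variable {X : Type*} [NormedAddCommGroup X] [NormedSpace ℝ X] {S : ℝ → X →L[ℝ] X}

@[simp]
theorem implemented_apply_apply (t : ℝ) (C : X →L[ℝ] X) (x : X) :
    implemented S t C x = S t (C x) := rfl

theorem norm_implemented_le (t : ℝ) : ‖implemented S t‖ ≤ ‖S t‖ :=
  (implemented S t).opNorm_le_bound (norm_nonneg _) fun C => (S t).opNorm_comp_le C

theorem IsC0Semigroup.isBiContSotSemigroup_implemented [CompleteSpace X]
    (hS : IsC0Semigroup S) : IsBiContSotSemigroup (implemented S) where
  map_zero := by ext C x; simp [hS.map_zero]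
  map_add s t hs ht := by ext C x; simp [hS.map_add s t hs ht]
  strongCont C x := hS.strongCont (C x)
  expBound := by
    obtain ⟨M, hM1, ω, hM⟩ := hS.exists_norm_le_exp
    exact ⟨M, hM1, ω, fun t ht => norm_implemented_le t |>.trans (hM t ht)⟩
  biequi a _ u _ hu x ε hε := by
    obtain ⟨M, hM1, hM⟩ := hS.exists_norm_le_of_mem_Icc a
    have hM0 : 0 < M := zero_lt_one.trans_le hM1
    obtain ⟨N, hN⟩ := Metric.tendsto_atTop.1 (hu x) (ε / M) (by positivity)
    refine ⟨N, fun n hn t ht => ?_⟩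
    calc ‖implemented S t (u n) x‖ ≤ M * ‖u n x‖ := (S t).le_of_opNorm_le (hM t ht) _
      _ < M * (ε / M) := by gcongr; simpa using hN n hn
      _ = ε := mul_div_cancel₀ ε hM0.ne'

theorem IsC0Semigroup.sotGenRel_implemented_iff [CompleteSpace X] (hS : IsC0Semigroup S)
    {C Y : X →L[ℝ] X} : SotGenRel (implemented S) C Y ↔ ∀ x, C0GenRel S (C x) (Y x) := by
  refine ⟨fun h x => h.1 x, fun h => ⟨h, ?_⟩⟩
  obtain ⟨M, hM1, hM⟩ := hS.exists_norm_le_of_mem_Icc 1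
  have hM0 : 0 ≤ M := zero_le_one.trans hM1
  refine ⟨M * ‖Y‖, fun t ht => ?_⟩
  refine (implemented S t C - C).opNorm_le_bound (by have := ht.1; positivity) fun x => ?_
  calc ‖(implemented S t C - C) x‖ = ‖S t (C x) - C x‖ := rfl
    _ ≤ M * ‖Y x‖ * t := hS.norm_apply_sub_le_of_c0GenRel (h x) hM (Ioc_subset_Icc_self ht)
    _ ≤ M * (‖Y‖ * ‖x‖) * t := by have := ht.1; gcongr; exact Y.le_opNorm x
    _ = M * ‖Y‖ * t * ‖x‖ := by ring

end Implemented

theorem IsC0Semigroup.generatedByPerturbedImpl_implemented [CompleteSpace E]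
    {S : ℝ → E →L[ℝ] E} (hS : IsC0Semigroup S) {ι : E →L[ℝ] E₁} {Am : E ≃L[ℝ] E₁}
    {B : E →L[ℝ] E₁} (hSgen : ∀ x y : E, C0GenRel S x y ↔ ι y = Am x + B x) :
    GeneratedByPerturbedImpl (implemented S) ι Am (ContinuousLinearMap.compL ℝ E E E₁ B) := by
  refine ⟨hS.isBiContSotSemigroup_implemented, fun C Y => ?_⟩
  rw [hS.sotGenRel_implemented_iff, ContinuousLinearMap.ext_iff]
  simp [hSgen]

theorem stmt_7_general [CompleteSpace E]
    (T S : ℝ → E →L[ℝ] E) (T₁ : ℝ → E₁ →L[ℝ] E₁) (ι : E →L[ℝ] E₁) (Am : E ≃L[ℝ] E₁)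
    (hExt : ExtrapolationData T T₁ ι Am)
    (t₀ : ℝ) (B : E →L[ℝ] E₁) (hB : MemSDS T₁ ι B t₀)
    (hS : IsC0Semigroup S)
    (hSgen : ∀ x y : E, C0GenRel S x y ↔ ι y = Am x + B x) :
    MemSDSsot T₁ ι (ContinuousLinearMap.compL ℝ E E E₁ B) t₀ ∧
      GeneratedByPerturbedImpl (implemented S) ι Am
        (ContinuousLinearMap.compL ℝ E E E₁ B) := by
  have : CompleteSpace E₁ := (Am.isUniformEmbedding.completeSpace_congr Am.surjective).1 ‹_›
  exact ⟨hB.memSDSsot_compL hExt.inj hExt.c0T₁, hS.generatedByPerturbedImpl_implemented hSgen⟩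

/-- A Desch–Schappacher perturbation `B ∈ 𝒮^{DS}_{t₀}(T)` of a `C₀`-semigroup
induces the admissible multiplication perturbation `𝒦(C) = B∘C` of the implemented semigroup,
and the perturbed semigroup on `𝓛(E)` is left implemented by the perturbed `C₀`-semigroup. -/
theorem stmt_7 [CompleteSpace E] [CompleteSpace E₁]
    (T S : ℝ → E →L[ℝ] E) (T₁ : ℝ → E₁ →L[ℝ] E₁) (ι : E →L[ℝ] E₁) (Am : E ≃L[ℝ] E₁)
    (hExt : ExtrapolationData T T₁ ι Am)
    (t₀ : ℝ) (ht₀ : 0 < t₀) (B : E →L[ℝ] E₁) (hB : MemSDS T₁ ι B t₀)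
    (hS : IsC0Semigroup S)
    (hSgen : ∀ x y : E, C0GenRel S x y ↔ ι y = Am x + B x)
    (hSvar : ∀ t : ℝ, 0 ≤ t → ∀ x : E,
      ι (S t x) = ι (T t x) + ∫ r in (0:ℝ)..t, T₁ (t - r) (B (S r x))) :
    MemSDSsot T₁ ι (ContinuousLinearMap.compL ℝ E E E₁ B) t₀ ∧
      GeneratedByPerturbedImpl (implemented S) ι Am
        (ContinuousLinearMap.compL ℝ E E E₁ B) :=
  stmt_7_general T S T₁ ι Am hExt t₀ B hB hS hSgen
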